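/- Let {(X_k, 𝒳_k)}_{k ≥ 0} be measurable spaces, P⁰, P̃⁰ probability measures on X₀, and for k ≥ 1 let Pᵏ, P̃ᵏ : Ω_{k-1} → 𝒫(X_k) be stochastic kernels on the product space Ω_{k-1} = X₀ × ⋯ × X_{k-1}. If ‖Pᵏ - P̃ᵏ‖ ≤ c_k for all k, then the finite-dimensional product measures ℙⁿ = P⁰ ⊗ P¹ ⊗ ⋯ ⊗ Pⁿ and ℙ̃ⁿ = P̃⁰ ⊗ ⋯ ⊗ P̃ⁿ satisfy ‖ℙⁿ - ℙ̃ⁿ‖ ≤ Σ_{k=0}^n c_k for every n ≥ 0. -/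

import Mathlib

open MeasureTheory ProbabilityTheory
open scoped ENNReal

/-- Total mass (as a real number) of a measure. -/
noncomputable def mass {X : Type*} [MeasurableSpace X] (μ : Measure X) : ℝ :=
  (μ Set.univ).toReal

/-- Total variation distance `‖ν - ν'‖` between two finite measures. -/
noncomputable def tvDist {X : Type*} [MeasurableSpace X] (ν ν' : Measure X)
    [IsFiniteMeasure ν] [IsFiniteMeasure ν'] : ℝ :=
  (((ν.toSignedMeasure - ν'.toSignedMeasure).totalVariation) Set.univ).toReal

/-- The minimum `ν ∧ ν' := ν - (ν - ν')⁻` of two finite measures, via the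
Hahn–Jordan decomposition of `ν - ν'`. -/
noncomputable def measInf {X : Type*} [MeasurableSpace X] (ν ν' : Measure X)
    [IsFiniteMeasure ν] [IsFiniteMeasure ν'] : Measure X :=
  ν - (ν.toSignedMeasure - ν'.toSignedMeasure).toJordanDecomposition.negPart

/-!
For finite measures the Jordan decomposition of `μ - ν` is the pair of truncated differences
`(μ - ν, ν - μ)`, and for probability measures both parts have the same mass, so
`‖μ - ν‖ = 2 (μ - ν)(Ω)`. By the Hahn decomposition, `(μ - ν)(Ω)` is the least `c` with
`μ s ≤ ν s + c` for every measurable `s`. Hence it does not grow under push-forward, and for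
composition products
`(μ ⊗ κ)(S) = ∫ κ_ω(S_ω) dμ ≤ ∫ η_ω(S_ω) dμ + b ≤ ∫ η_ω(S_ω) dν + (μ - ν)(Ω) + b`,
the last step because `ω ↦ η_ω(S_ω)` is bounded by `1`. Along the Ionescu-Tulcea recursion each
step therefore adds one `c_k`.
-/

namespace MeasureTheory.Measure

variable {Ω : Type*} [MeasurableSpace Ω] (μ ν : Measure Ω)

theorem add_sub_eq_add_sub [IsFiniteMeasure μ] [IsFiniteMeasure ν] :
    μ + (ν - μ) = ν + (μ - ν) := by
  have h := sub_toSignedMeasure_eq_toSignedMeasure_sub (μ := μ) (ν := ν)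
  rw [sub_eq_sub_iff_add_eq_add] at h
  rw [← toSignedMeasure_eq_toSignedMeasure_iff, toSignedMeasure_add, toSignedMeasure_add, h,
    add_comm]

theorem sub_apply_univ_comm [IsProbabilityMeasure μ] [IsProbabilityMeasure ν] :
    (μ - ν) Set.univ = (ν - μ) Set.univ := by
  have h := congrArg (· Set.univ) (add_sub_eq_add_sub μ ν)
  simp only [add_apply, measure_univ] at h
  exact (ENNReal.add_right_inj ENNReal.one_ne_top).mp h.symm

theorem le_add_sub [IsFiniteMeasure μ] [IsFiniteMeasure ν] : μ ≤ ν + (μ - ν) :=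
  add_sub_eq_add_sub μ ν ▸ Measure.le_add_right le_rfl

theorem lintegral_le_lintegral_add_sub_apply_univ [IsFiniteMeasure μ] [IsFiniteMeasure ν]
    {g : Ω → ℝ≥0∞} (hg : ∀ x, g x ≤ 1) :
    ∫⁻ x, g x ∂μ ≤ ∫⁻ x, g x ∂ν + (μ - ν) Set.univ :=
  calc ∫⁻ x, g x ∂μ ≤ ∫⁻ x, g x ∂(ν + (μ - ν)) := lintegral_mono' (le_add_sub μ ν) le_rfl
    _ = ∫⁻ x, g x ∂ν + ∫⁻ x, g x ∂(μ - ν) := lintegral_add_measure _ _ _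
    _ ≤ ∫⁻ x, g x ∂ν + ∫⁻ _, 1 ∂(μ - ν) := by gcongr with x; exact hg x
    _ = ∫⁻ x, g x ∂ν + (μ - ν) Set.univ := by rw [lintegral_one]

theorem apply_le_add_sub_apply_univ [IsFiniteMeasure μ] [IsFiniteMeasure ν] (s : Set Ω) :
    μ s ≤ ν s + (μ - ν) Set.univ :=
  calc μ s ≤ (ν + (μ - ν)) s := le_add_sub μ ν s
    _ ≤ ν s + (μ - ν) Set.univ := by rw [add_apply]; gcongr; exact Set.subset_univ s

theorem sub_apply_univ_le_of_forall_le_add [IsFiniteMeasure μ] [IsFiniteMeasure ν] {c : ℝ≥0∞}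
    (h : ∀ s, MeasurableSet s → μ s ≤ ν s + c) : (μ - ν) Set.univ ≤ c := by
  obtain ⟨s, hs⟩ := exists_isHahnDecomposition μ ν
  have hsc := hs.measurableSet.compl
  calc (μ - ν) Set.univ ≤ (μ - ν) s + (μ - ν) sᶜ := measure_univ_le_add_compl s
    _ = μ sᶜ - ν sᶜ := by
      rw [sub_apply_eq_zero_of_isHahnDecomposition hs, zero_add, ← restrict_apply_univ,
        restrict_sub_eq_restrict_sub_restrict hsc, sub_apply MeasurableSet.univ hs.ge_on_compl,
        restrict_apply_univ, restrict_apply_univ]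
    _ ≤ c := tsub_le_iff_left.mpr (h sᶜ hsc)

theorem map_sub_map_apply_univ_le [IsFiniteMeasure μ] [IsFiniteMeasure ν] {Γ : Type*}
    [MeasurableSpace Γ] {f : Ω → Γ} (hf : Measurable f) :
    (μ.map f - ν.map f) Set.univ ≤ (μ - ν) Set.univ := by
  refine sub_apply_univ_le_of_forall_le_add _ _ fun s hs => ?_
  rw [map_apply hf hs, map_apply hf hs]
  exact apply_le_add_sub_apply_univ μ ν _

theorem compProd_sub_compProd_apply_univ_le [IsProbabilityMeasure μ] [IsFiniteMeasure ν]
    {Y : Type*} [MeasurableSpace Y] (κ η : Kernel Ω Y) [IsMarkovKernel κ] [IsMarkovKernel η]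
    {b : ℝ≥0∞} (hb : ∀ ω, (κ ω - η ω) Set.univ ≤ b) :
    (μ ⊗ₘ κ - ν ⊗ₘ η) Set.univ ≤ (μ - ν) Set.univ + b := by
  refine sub_apply_univ_le_of_forall_le_add _ _ fun S hS => ?_
  rw [compProd_apply hS, compProd_apply hS]
  calc ∫⁻ ω, κ ω (Prod.mk ω ⁻¹' S) ∂μ ≤ ∫⁻ ω, η ω (Prod.mk ω ⁻¹' S) + b ∂μ :=
        lintegral_mono fun ω => (apply_le_add_sub_apply_univ _ _ _).trans (by gcongr; exact hb ω)
    _ = ∫⁻ ω, η ω (Prod.mk ω ⁻¹' S) ∂μ + b := by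
        rw [lintegral_add_right _ measurable_const, lintegral_const, measure_univ, mul_one]
    _ ≤ ∫⁻ ω, η ω (Prod.mk ω ⁻¹' S) ∂ν + (μ - ν) Set.univ + b := by
        gcongr; exact lintegral_le_lintegral_add_sub_apply_univ μ ν fun _ => prob_le_one
    _ = ∫⁻ ω, η ω (Prod.mk ω ⁻¹' S) ∂ν + ((μ - ν) Set.univ + b) := add_assoc _ _ _

end MeasureTheory.Measure

section TotalVariation

variable {Ω : Type*} [MeasurableSpace Ω] (μ ν : Measure Ω)

theorem tvDist_nonneg [IsFiniteMeasure μ] [IsFiniteMeasure ν] : 0 ≤ tvDist μ ν :=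
  ENNReal.toReal_nonneg

theorem tvDist_eq_toReal_sub_add_sub [IsFiniteMeasure μ] [IsFiniteMeasure ν] :
    tvDist μ ν = ((μ - ν) Set.univ + (ν - μ) Set.univ).toReal := by
  simp only [tvDist, SignedMeasure.totalVariation,
    Measure.toJordanDecomposition_toSignedMeasure_sub,
    Measure.jordanDecompositionOfToSignedMeasureSub_posPart,
    Measure.jordanDecompositionOfToSignedMeasureSub_negPart, Measure.add_apply]

theorem tvDist_eq_two_mul_toReal_sub [IsProbabilityMeasure μ] [IsProbabilityMeasure ν] :
    tvDist μ ν = 2 * ((μ - ν) Set.univ).toReal := by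
  rw [tvDist_eq_toReal_sub_add_sub, ← Measure.sub_apply_univ_comm μ ν,
    ENNReal.toReal_add (by finiteness) (by finiteness)]
  ring

theorem tvDist_le_iff [IsProbabilityMeasure μ] [IsProbabilityMeasure ν] {a : ℝ} (ha : 0 ≤ a) :
    tvDist μ ν ≤ a ↔ (μ - ν) Set.univ ≤ ENNReal.ofReal (a / 2) := by
  rw [tvDist_eq_two_mul_toReal_sub, ENNReal.le_ofReal_iff_toReal_le (by finiteness) (by positivity)]
  constructor <;> intro <;> linarith

theorem tvDist_map_le [IsFiniteMeasure μ] [IsFiniteMeasure ν] {Γ : Type*} [MeasurableSpace Γ]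
    {f : Ω → Γ} (hf : Measurable f) : tvDist (μ.map f) (ν.map f) ≤ tvDist μ ν := by
  rw [tvDist_eq_toReal_sub_add_sub, tvDist_eq_toReal_sub_add_sub]
  exact ENNReal.toReal_mono (by finiteness) (add_le_add
    (Measure.map_sub_map_apply_univ_le μ ν hf) (Measure.map_sub_map_apply_univ_le ν μ hf))

theorem tvDist_compProd_le [IsProbabilityMeasure μ] [IsProbabilityMeasure ν] {Y : Type*}
    [MeasurableSpace Y] (κ η : Kernel Ω Y) [IsMarkovKernel κ] [IsMarkovKernel η] {a b : ℝ}
    (ha : tvDist μ ν ≤ a) (hb : ∀ ω, tvDist (κ ω) (η ω) ≤ b) :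
    tvDist (μ ⊗ₘ κ) (ν ⊗ₘ η) ≤ a + b := by
  have := nonempty_of_isProbabilityMeasure μ
  have ha0 : 0 ≤ a := (tvDist_nonneg μ ν).trans ha
  have hb0 : 0 ≤ b := (tvDist_nonneg _ _).trans (hb (Classical.arbitrary Ω))
  rw [tvDist_le_iff _ _ (add_nonneg ha0 hb0), add_div,
    ENNReal.ofReal_add (by positivity) (by positivity)]
  refine (Measure.compProd_sub_compProd_apply_univ_le μ ν κ η
    fun ω => (tvDist_le_iff _ _ hb0).mp (hb ω)).trans ?_
  gcongr
  exact (tvDist_le_iff μ ν ha0).mp ha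

end TotalVariation

theorem measurable_finCons_finZeroElim {α : Fin 1 → Type*} [∀ i, MeasurableSpace (α i)] :
    Measurable (fun x : α 0 => Fin.cons (α := α) x finZeroElim) :=
  measurable_pi_lambda _ fun i => Fin.cases (by simpa using measurable_id') (fun j => j.elim0) i

theorem measurable_finSnoc {n : ℕ} {α : Fin (n + 1) → Type*} [∀ i, MeasurableSpace (α i)] :
    Measurable fun q : (∀ i : Fin n, α i.castSucc) × α (Fin.last n) =>
      Fin.snoc (α := α) q.1 q.2 := by
  refine measurable_pi_lambda _ fun i => Fin.lastCases ?_ (fun j => ?_) i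
  · simpa using measurable_snd
  · simp only [Fin.snoc_castSucc]
    exact (measurable_pi_apply j).comp measurable_fst

/-- Linear perturbation bound for Ionescu–Tulcea product measures on arbitrary
measurable spaces: if `‖P^k − P̃^k‖ ≤ c_k` for all `k`, then
`‖ℙⁿ − ℙ̃ⁿ‖ ≤ ∑_{k=0}^n c_k`.  Here `Pr n` denotes the finite-dimensional
product `ℙⁿ = P⁰ ⊗ ⋯ ⊗ Pⁿ`, characterized inductively via `compProd`. -/
theorem stmt2 {X : ℕ → Type*} [∀ k, MeasurableSpace (X k)]
    (P0 P0' : Measure (X 0)) [IsProbabilityMeasure P0] [IsProbabilityMeasure P0']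
    (P P' : ∀ k, Kernel (∀ i : Fin (k + 1), X i.val) (X (k + 1)))
    [∀ k, IsMarkovKernel (P k)] [∀ k, IsMarkovKernel (P' k)]
    (Pr Pr' : ∀ n, Measure (∀ i : Fin (n + 1), X i.val))
    [∀ n, IsProbabilityMeasure (Pr n)] [∀ n, IsProbabilityMeasure (Pr' n)]
    (hPr0 : Pr 0 = P0.map (fun x => Fin.cons (α := fun i : Fin 1 => X i.val) x finZeroElim))
    (hPr0' : Pr' 0 = P0'.map (fun x => Fin.cons (α := fun i : Fin 1 => X i.val) x finZeroElim))
    (hPr : ∀ n, Pr (n + 1) =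
      ((Pr n) ⊗ₘ (P n)).map (fun q => Fin.snoc (α := fun i : Fin (n + 2) => X i.val) q.1 q.2))
    (hPr' : ∀ n, Pr' (n + 1) =
      ((Pr' n) ⊗ₘ (P' n)).map (fun q => Fin.snoc (α := fun i : Fin (n + 2) => X i.val) q.1 q.2))
    (c : ℕ → ℝ)
    (hc0 : tvDist P0 P0' ≤ c 0)
    (hc : ∀ k, ∀ ω, tvDist (P k ω) (P' k ω) ≤ c (k + 1)) :
    ∀ n, tvDist (Pr n) (Pr' n) ≤ ∑ k ∈ Finset.range (n + 1), c k := by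
  intro n
  induction n with
  | zero =>
    rw [Finset.sum_range_one]
    simp only [hPr0, hPr0']
    exact (tvDist_map_le _ _ measurable_finCons_finZeroElim).trans hc0
  | succ n ih =>
    rw [Finset.sum_range_succ]
    simp only [hPr, hPr']
    exact (tvDist_map_le _ _ measurable_finSnoc).trans (tvDist_compProd_le _ _ _ _ ih (hc n))
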